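/- Let S be an inverse semigroup, τ a congruence on E(S), N = N(τ), and ψ = { (a,b) ∈ N × N : a⁻¹a τ b⁻¹b and ab⁻¹ ∈ C(τ) }. Then ψ is a two-sided congruence on the inverse semigroup N. -/

import Mathlib

class InverseSemigroup (S : Type*) extends Semigroup S where
  inv : S → S
  mul_inv_mul : ∀ a : S, a * inv a * a = a
  inv_mul_inv : ∀ a : S, inv a * a * inv a = inv a
  inv_unique : ∀ a b : S, a * b * a = a → b * a * b = b → b = inv a

open InverseSemigroup

/-- `e` is an idempotent. -/
def IsIdem {S : Type*} [Mul S] (e : S) : Prop := e * e = e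

/-- `r` is a left congruence: an equivalence relation compatible with left multiplication. -/
def IsLeftCongruence {S : Type*} [Semigroup S] (r : S → S → Prop) : Prop :=
  Equivalence r ∧ ∀ a b c : S, r a b → r (c * a) (c * b)

/-- The inverse kernel of a relation: elements related to `a * a⁻¹`. -/
def InK {S : Type*} [InverseSemigroup S] (r : S → S → Prop) : Set S :=
  {a | r a (a * inv a)}

/-- The kernel: elements related to some idempotent. -/
def lker {S : Type*} [InverseSemigroup S] (r : S → S → Prop) : Set S :=
  {a | ∃ e, IsIdem e ∧ r a e}

/-- `τ` is a congruence on the semilattice of idempotents `E(S)`. -/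
def IsECong {S : Type*} [InverseSemigroup S] (τ : S → S → Prop) : Prop :=
  (∀ e f, τ e f → IsIdem e ∧ IsIdem f) ∧
  (∀ e, IsIdem e → τ e e) ∧
  (∀ e f, τ e f → τ f e) ∧
  (∀ e f g, τ e f → τ f g → τ e g) ∧
  (∀ e f g, IsIdem g → τ e f → τ (g * e) (g * f))

/-- The normaliser of a congruence on the idempotents. -/
def normaliser {S : Type*} [InverseSemigroup S] (τ : S → S → Prop) : Set S :=
  {a | ∀ e f, τ e f → τ (a * e * inv a) (a * f * inv a) ∧ τ (inv a * e * a) (inv a * f * a)}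

/-- `T` is a full inverse subsemigroup of `S`. -/
def IsFullInverseSub {S : Type*} [InverseSemigroup S] (T : Set S) : Prop :=
  (∀ e : S, IsIdem e → e ∈ T) ∧ (∀ a b, a ∈ T → b ∈ T → a * b ∈ T) ∧
  (∀ a, a ∈ T → inv a ∈ T)

/-- The centraliser of a congruence on the idempotents. -/
def centraliser {S : Type*} [InverseSemigroup S] (τ : S → S → Prop) : Set S :=
  {a | a ∈ normaliser τ ∧ ∃ e, IsIdem e ∧ τ e (InverseSemigroup.inv a * a) ∧ a * e = e}

/-!
Reflexivity, symmetry and compatibility of `ψ` reduce to closure properties of `C(τ)`: it contains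
the idempotents and is closed under inverses, products and conjugation `x ↦ c x c⁻¹` by `c ∈ N(τ)`.
The key fact is that conjugation by `x ∈ C(τ)` is trivial on idempotents modulo `τ`,
`x h x⁻¹ τ h x x⁻¹`, which also yields `a⁻¹ h a τ b⁻¹ h b` whenever `ψ a b`.
For transitivity, `(a b⁻¹)(b c⁻¹) = (a c⁻¹) g` with `g = c b⁻¹ b c⁻¹` idempotent, and a witness
`e` for `(a c⁻¹) g ∈ C(τ)` is fixed by `g`, hence also witnesses `a c⁻¹ ∈ C(τ)`.
-/

namespace InverseSemigroup

variable {S : Type*} [InverseSemigroup S]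

theorem inv_inv_eq (a : S) : inv (inv a) = a :=
  (inv_unique (inv a) a (inv_mul_inv a) (mul_inv_mul a)).symm

theorem mul_inv_mul' (a : S) : a * (inv a * a) = a := by
  rw [← mul_assoc, mul_inv_mul]

theorem inv_mul_inv' (a : S) : inv a * (a * inv a) = inv a := by
  rw [← mul_assoc, inv_mul_inv]

theorem mul_inv_mul_assoc (a t : S) : a * (inv a * (a * t)) = a * t := by
  rw [← mul_assoc, ← mul_assoc, mul_inv_mul]

theorem inv_mul_inv_assoc (a t : S) : inv a * (a * (inv a * t)) = inv a * t := by
  rw [← mul_assoc, ← mul_assoc, inv_mul_inv]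

theorem isIdem_mul_inv (a : S) : IsIdem (a * inv a) := by
  rw [IsIdem, ← mul_assoc, mul_inv_mul]

theorem isIdem_inv_mul (a : S) : IsIdem (inv a * a) := by
  rw [IsIdem, ← mul_assoc, inv_mul_inv]

end InverseSemigroup

namespace IsIdem

variable {S : Type*} [InverseSemigroup S] {e f : S}

theorem mul_self_assoc (he : IsIdem e) (t : S) : e * (e * t) = e * t := by
  rw [← mul_assoc, he]

theorem inv_eq (he : IsIdem e) : inv e = e :=
  (inv_unique e e (by rw [he, he]) (by rw [he, he])).symm

/-- With `x = (e * f)⁻¹`, the element `f * x * e` is also an inverse of `e * f`, so `x = f * x * e`;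
this forces `x`, and hence `e * f = x⁻¹`, to be idempotent. -/
theorem mul (he : IsIdem e) (hf : IsIdem f) : IsIdem (e * f) := by
  set x := inv (e * f)
  have hefx : e * (f * (x * (e * f))) = e * f := by
    simpa only [mul_assoc] using mul_inv_mul (e * f)
  have hxef : x * (e * (f * x)) = x := by simpa only [mul_assoc] using inv_mul_inv (e * f)
  have hxefxe : x * (e * (f * (x * e))) = x * e :=
    calc x * (e * (f * (x * e))) = x * (e * (f * x)) * e := by simp only [mul_assoc]
      _ = x * e := by rw [hxef]
  have hx : f * x * e = x := inv_unique (e * f) (f * x * e)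
    (by simp only [mul_assoc, hf.mul_self_assoc, he.mul_self_assoc]; exact hefx)
    (by simp only [mul_assoc, hf.mul_self_assoc, he.mul_self_assoc]; rw [hxefxe])
  have hxx : IsIdem x := by
    rw [IsIdem]
    conv_lhs => rw [← hx]
    simp only [mul_assoc]
    rw [hxefxe, ← mul_assoc, hx]
  have hef : e * f = inv x := inv_unique x (e * f)
    (by simpa only [mul_assoc] using hxef) (by simpa only [mul_assoc] using hefx)
  rw [hef, hxx.inv_eq]
  exact hxx

theorem comm (he : IsIdem e) (hf : IsIdem f) : e * f = f * e := by
  have idem_assoc {a b : S} (ha : IsIdem a) (hb : IsIdem b) : a * (b * (a * b)) = a * b := by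
    simpa only [IsIdem, mul_assoc] using ha.mul hb
  rw [inv_unique (f * e) (e * f)
    (by simp only [mul_assoc, hf.mul_self_assoc, he.mul_self_assoc]; exact idem_assoc hf he)
    (by simp only [mul_assoc, hf.mul_self_assoc, he.mul_self_assoc]; exact idem_assoc he hf),
    (hf.mul he).inv_eq]

end IsIdem

namespace InverseSemigroup

variable {S : Type*} [InverseSemigroup S]

theorem inv_mul_rev (a b : S) : inv (a * b) = inv b * inv a := by
  have hab : inv a * a * (b * inv b) = b * inv b * (inv a * a) :=
    (isIdem_inv_mul a).comm (isIdem_mul_inv b)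
  refine (inv_unique (a * b) (inv b * inv a) ?_ ?_).symm
  · calc a * b * (inv b * inv a) * (a * b) = a * (b * inv b * (inv a * a)) * b := by
          simp only [mul_assoc]
      _ = a * b := by rw [← hab]; simp only [mul_assoc, mul_inv_mul_assoc, mul_inv_mul']
  · calc inv b * inv a * (a * b) * (inv b * inv a) = inv b * (inv a * a * (b * inv b)) * inv a := by
          simp only [mul_assoc]
      _ = inv b * inv a := by
          rw [hab]; simp only [mul_assoc, inv_mul_inv_assoc, inv_mul_inv']

end InverseSemigroup

namespace IsIdem

variable {S : Type*} [InverseSemigroup S] {e f : S}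

theorem conj_mul_conj (he : IsIdem e) (a t : S) :
    a * e * inv a * (a * t * inv a) = a * (e * t) * inv a :=
  calc a * e * inv a * (a * t * inv a) = a * (e * (inv a * a)) * (t * inv a) := by
        simp only [mul_assoc]
    _ = a * (e * t) * inv a := by
        rw [he.comm (isIdem_inv_mul a)]; simp only [mul_assoc, mul_inv_mul_assoc]

theorem conj (he : IsIdem e) (a : S) : IsIdem (a * e * inv a) := by
  rw [IsIdem, he.conj_mul_conj, he]

theorem inv_conj (he : IsIdem e) (a : S) : IsIdem (inv a * e * a) := by
  simpa only [inv_inv_eq] using he.conj (inv a)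

theorem mul_inv_eq_of_mul_eq (he : IsIdem e) {a : S} (hae : a * e = e) : e * inv a = e := by
  simpa only [inv_mul_rev, he.inv_eq] using congrArg inv hae

theorem inv_mul_eq_of_mul_eq (he : IsIdem e) {a : S} (hae : a * e = e) : inv a * e = e :=
  calc inv a * e = inv a * (a * e) * inv a := by
        rw [hae, mul_assoc, he.mul_inv_eq_of_mul_eq hae]
    _ = e * (inv a * a) * inv a := by rw [← mul_assoc, (isIdem_inv_mul a).comm he]
    _ = e := by rw [mul_assoc, inv_mul_inv, he.mul_inv_eq_of_mul_eq hae]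

theorem mul_mul_eq_of_mul_eq (he : IsIdem e) (hf : IsIdem f) {a : S} (hae : a * e = e) :
    a * (f * e) = f * e := by
  rw [hf.comm he, ← mul_assoc, hae]

end IsIdem

namespace IsECong

variable {S : Type*} [InverseSemigroup S] {τ : S → S → Prop} {e f e' f' g : S}

theorem isIdem_left (hτ : IsECong τ) (h : τ e f) : IsIdem e := (hτ.1 e f h).1

theorem isIdem_right (hτ : IsECong τ) (h : τ e f) : IsIdem f := (hτ.1 e f h).2

theorem refl (hτ : IsECong τ) (he : IsIdem e) : τ e e := hτ.2.1 e he

theorem symm (hτ : IsECong τ) (h : τ e f) : τ f e := hτ.2.2.1 e f h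

theorem trans (hτ : IsECong τ) (h : τ e f) (h' : τ f g) : τ e g := hτ.2.2.2.1 e f g h h'

theorem mul_left (hτ : IsECong τ) (hg : IsIdem g) (h : τ e f) : τ (g * e) (g * f) :=
  hτ.2.2.2.2 e f g hg h

theorem mul_right (hτ : IsECong τ) (hg : IsIdem g) (h : τ e f) : τ (e * g) (f * g) := by
  rw [(hτ.isIdem_left h).comm hg, (hτ.isIdem_right h).comm hg]
  exact hτ.mul_left hg h

theorem mul (hτ : IsECong τ) (h : τ e f) (h' : τ e' f') : τ (e * e') (f * f') :=
  hτ.trans (hτ.mul_right (hτ.isIdem_left h') h) (hτ.mul_left (hτ.isIdem_right h) h')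

theorem mul_rel_left (hτ : IsECong τ) (h : τ e f) : τ (e * f) e := by
  have h' := hτ.symm (hτ.mul_left (hτ.isIdem_left h) h)
  rwa [hτ.isIdem_left h] at h'

theorem mul_rel_right (hτ : IsECong τ) (h : τ e f) : τ (e * f) f := by
  have h' := hτ.mul_right (hτ.isIdem_right h) h
  rwa [hτ.isIdem_right h] at h'

end IsECong

section Normaliser

variable {S : Type*} [InverseSemigroup S] {τ : S → S → Prop} {a b g : S}

theorem mem_normaliser_of_isIdem (hτ : IsECong τ) (hg : IsIdem g) : g ∈ normaliser τ := by
  have conj_eq {e : S} (he : IsIdem e) : g * e * g = g * e := by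
    rw [mul_assoc, he.comm hg, hg.mul_self_assoc]
  intro e f h
  rw [hg.inv_eq, conj_eq (hτ.isIdem_left h), conj_eq (hτ.isIdem_right h)]
  exact ⟨hτ.mul_left hg h, hτ.mul_left hg h⟩

theorem mul_mem_normaliser (ha : a ∈ normaliser τ) (hb : b ∈ normaliser τ) :
    a * b ∈ normaliser τ := fun e f h =>
  ⟨by simpa only [inv_mul_rev, mul_assoc] using (ha _ _ (hb e f h).1).1,
    by simpa only [inv_mul_rev, mul_assoc] using (hb _ _ (ha e f h).2).2⟩

theorem inv_mem_normaliser (ha : a ∈ normaliser τ) : inv a ∈ normaliser τ := fun e f h => by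
  simpa only [inv_inv_eq] using (ha e f h).symm

end Normaliser

section Centraliser

variable {S : Type*} [InverseSemigroup S] {τ : S → S → Prop} {c g h x y : S}

theorem mem_centraliser_of_isIdem (hτ : IsECong τ) (hg : IsIdem g) : g ∈ centraliser τ := by
  refine ⟨mem_normaliser_of_isIdem hτ hg, g, hg, ?_, hg⟩
  rw [hg.inv_eq, hg]
  exact hτ.refl hg

theorem rel_mul_inv_of_mem_centraliser {e : S} (hx : x ∈ normaliser τ) (he : IsIdem e)
    (hτe : τ e (inv x * x)) (hxe : x * e = e) : τ e (x * inv x) := by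
  have h := (hx _ _ hτe).1
  rwa [mul_assoc, he.mul_inv_eq_of_mul_eq hxe, hxe, ← mul_assoc, mul_inv_mul] at h

theorem inv_mem_centraliser (hx : x ∈ centraliser τ) : inv x ∈ centraliser τ := by
  obtain ⟨hxN, e, he, hτe, hxe⟩ := hx
  refine ⟨inv_mem_normaliser hxN, e, he, ?_, he.inv_mul_eq_of_mul_eq hxe⟩
  rw [inv_inv_eq]
  exact rel_mul_inv_of_mem_centraliser hxN he hτe hxe

theorem rel_conj_of_mem_centraliser (hτ : IsECong τ) (hx : x ∈ centraliser τ) (hh : IsIdem h) :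
    τ (x * h * inv x) (h * (x * inv x)) := by
  obtain ⟨hxN, e, he, hτe, hxe⟩ := hx
  have hτe' := rel_mul_inv_of_mem_centraliser hxN he hτe hxe
  have h₁ := hτ.mul_left (hh.conj x) hτe'
  have h₂ := hτ.mul_left hh hτe'
  have hconj : x * h * inv x * (x * inv x) = x * h * inv x := by
    simp only [mul_assoc, inv_mul_inv']
  rw [hconj, mul_assoc _ (inv x), he.inv_mul_eq_of_mul_eq hxe, mul_assoc,
    he.mul_mul_eq_of_mul_eq hh hxe] at h₁
  exact hτ.trans (hτ.symm h₁) h₂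

theorem rel_inv_conj_of_mem_centraliser (hτ : IsECong τ) (hx : x ∈ centraliser τ)
    (hh : IsIdem h) : τ (inv x * h * x) (h * (inv x * x)) := by
  simpa only [inv_inv_eq] using rel_conj_of_mem_centraliser hτ (inv_mem_centraliser hx) hh

theorem mul_mem_centraliser (hτ : IsECong τ) (hx : x ∈ centraliser τ) (hy : y ∈ centraliser τ) :
    x * y ∈ centraliser τ := by
  obtain ⟨hxN, e, he, hτe, hxe⟩ := hx
  obtain ⟨hyN, f, hf, hτf, hyf⟩ := hy
  refine ⟨mul_mem_normaliser hxN hyN, e * f, he.mul hf, ?_, ?_⟩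
  · have hconj := rel_inv_conj_of_mem_centraliser hτ ⟨hyN, f, hf, hτf, hyf⟩ (isIdem_inv_mul x)
    rw [inv_mul_rev]
    simpa only [mul_assoc] using hτ.trans (hτ.mul hτe hτf) (hτ.symm hconj)
  · rw [mul_assoc, hf.mul_mul_eq_of_mul_eq he hyf, he.comm hf]
    exact he.mul_mul_eq_of_mul_eq hf hxe

theorem conj_mem_centraliser (hτ : IsECong τ) (hc : c ∈ normaliser τ) (hx : x ∈ centraliser τ) :
    c * x * inv c ∈ centraliser τ := by
  obtain ⟨hxN, e, he, hτe, hxe⟩ := hx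
  have hconj := rel_inv_conj_of_mem_centraliser hτ ⟨hxN, e, he, hτe, hxe⟩ (isIdem_inv_mul c)
  refine ⟨mul_mem_normaliser (mul_mem_normaliser hc hxN) (inv_mem_normaliser hc), c * e * inv c,
    he.conj c, ?_, ?_⟩
  · have h₁ := (hc _ _ hτe).1
    have h₂ := (hc _ _ hconj).1
    simp only [mul_assoc, mul_inv_mul_assoc] at h₁ h₂
    simpa only [inv_mul_rev, inv_inv_eq, mul_assoc] using hτ.trans h₁ (hτ.symm h₂)
  · calc c * x * inv c * (c * e * inv c) = c * x * (inv c * c * e) * inv c := by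
          simp only [mul_assoc]
      _ = c * e * inv c := by
          rw [(isIdem_inv_mul c).comm he, ← mul_assoc, mul_assoc c, hxe]
          simp only [mul_assoc, inv_mul_inv']

/-- A witness `e` for `x * g ∈ C(τ)` satisfies `g * e = e`, so it also witnesses `x ∈ C(τ)`. -/
theorem mem_centraliser_of_mul_isIdem (hτ : IsECong τ) (hx : x ∈ normaliser τ) (hg : IsIdem g)
    (hxg : x * g ∈ centraliser τ) (hτg : τ (inv x * x * g) (inv x * x)) :
    x ∈ centraliser τ := by
  obtain ⟨-, e, he, hτe, hxge⟩ := hxg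
  have hw : inv (x * g) * (x * g) = inv x * x * g := by
    rw [inv_mul_rev, hg.inv_eq, mul_assoc, ← mul_assoc _ x g, ← mul_assoc g,
      hg.comm (isIdem_inv_mul x), mul_assoc, hg]
  have hwe : inv x * x * g * e = e := by
    rw [← hw, mul_assoc, hxge, he.inv_mul_eq_of_mul_eq hxge]
  have hge : g * e = e :=
    calc g * e = g * (inv x * x * g * e) := by rw [hwe]
      _ = inv x * x * g * e := by
          rw [(isIdem_inv_mul x).comm hg]; simp only [mul_assoc, hg.mul_self_assoc]
      _ = e := hwe
  refine ⟨hx, e, he, hτ.trans (hw ▸ hτe) hτg, ?_⟩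
  rw [← hge, ← mul_assoc, hxge, hge]

end Centraliser

/-- The relation `ψ` of the statement. -/
def psi {S : Type*} [InverseSemigroup S] (τ : S → S → Prop) (a b : S) : Prop :=
  a ∈ normaliser τ ∧ b ∈ normaliser τ ∧ τ (inv a * a) (inv b * b) ∧ a * inv b ∈ centraliser τ

namespace psi

variable {S : Type*} [InverseSemigroup S] {τ : S → S → Prop} {a b c h : S}

theorem refl (hτ : IsECong τ) (ha : a ∈ normaliser τ) : psi τ a a :=
  ⟨ha, ha, hτ.refl (isIdem_inv_mul a), mem_centraliser_of_isIdem hτ (isIdem_mul_inv a)⟩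

theorem symm (hτ : IsECong τ) (hab : psi τ a b) : psi τ b a := by
  obtain ⟨haN, hbN, htr, hk⟩ := hab
  refine ⟨hbN, haN, hτ.symm htr, ?_⟩
  simpa only [inv_mul_rev, inv_inv_eq] using inv_mem_centraliser hk

theorem trans (hτ : IsECong τ) (hab : psi τ a b) (hbc : psi τ b c) : psi τ a c := by
  obtain ⟨haN, -, htr, hk⟩ := hab
  obtain ⟨-, hcN, htr', hk'⟩ := hbc
  refine ⟨haN, hcN, hτ.trans htr htr', ?_⟩
  have hinv : inv (a * inv c) * (a * inv c) = c * (inv a * a) * inv c := by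
    simp only [inv_mul_rev, inv_inv_eq, mul_assoc]
  have hprod : a * inv c * (c * (inv b * b) * inv c) = a * inv b * (b * inv c) :=
    calc a * inv c * (c * (inv b * b) * inv c) = a * (inv c * c * (inv b * b)) * inv c := by
          simp only [mul_assoc]
      _ = a * inv b * (b * inv c) := by
          rw [(isIdem_inv_mul c).comm (isIdem_inv_mul b)]
          simp only [mul_assoc, inv_mul_inv']
  refine mem_centraliser_of_mul_isIdem hτ (mul_mem_normaliser haN (inv_mem_normaliser hcN))
    ((isIdem_inv_mul b).conj c) (hprod ▸ mul_mem_centraliser hτ hk hk') ?_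
  rw [hinv, (isIdem_inv_mul a).conj_mul_conj]
  exact (hcN _ _ (hτ.mul_rel_left htr)).1

theorem rel_inv_conj (hτ : IsECong τ) (hab : psi τ a b) (hh : IsIdem h) :
    τ (inv a * h * a) (inv b * h * b) := by
  obtain ⟨-, hbN, htr, hk⟩ := hab
  have hconj := (hbN _ _ (rel_inv_conj_of_mem_centraliser hτ hk hh)).2
  have hL : inv b * (inv (a * inv b) * h * (a * inv b)) * b = inv a * h * a * (inv b * b) :=
    calc inv b * (inv (a * inv b) * h * (a * inv b)) * b
        = inv b * b * (inv a * h * a * (inv b * b)) := by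
          simp only [inv_mul_rev, inv_inv_eq, mul_assoc]
      _ = inv a * h * a * (inv b * b) := by
          rw [(isIdem_inv_mul b).comm ((hh.inv_conj a).mul (isIdem_inv_mul b))]
          simp only [mul_assoc, inv_mul_inv_assoc]
  have hR : inv b * (h * (inv (a * inv b) * (a * inv b))) * b
      = inv b * h * b * (inv a * a * (inv b * b)) := by
    simp only [inv_mul_rev, inv_inv_eq, mul_assoc]
  have hA : τ (inv a * h * a * (inv b * b)) (inv a * h * a) := by
    have h' := hτ.mul_left (hh.inv_conj a) (hτ.symm htr)
    rwa [mul_assoc (inv a * h) a (inv a * a), mul_inv_mul'] at h'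
  have hB : τ (inv b * h * b * (inv a * a * (inv b * b))) (inv b * h * b) := by
    have h' := hτ.mul_left (hh.inv_conj b) (hτ.mul_rel_right htr)
    rwa [mul_assoc (inv b * h) b (inv b * b), mul_inv_mul'] at h'
  rw [hL, hR] at hconj
  exact hτ.trans (hτ.symm hA) (hτ.trans hconj hB)

theorem mul_left (hτ : IsECong τ) (hc : c ∈ normaliser τ) (hab : psi τ a b) :
    psi τ (c * a) (c * b) := by
  refine ⟨mul_mem_normaliser hc hab.1, mul_mem_normaliser hc hab.2.1, ?_, ?_⟩
  · simpa only [inv_mul_rev, mul_assoc] using hab.rel_inv_conj hτ (isIdem_inv_mul c)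
  · simpa only [inv_mul_rev, mul_assoc] using conj_mem_centraliser hτ hc hab.2.2.2

theorem mul_right (hτ : IsECong τ) (hc : c ∈ normaliser τ) (hab : psi τ a b) :
    psi τ (a * c) (b * c) := by
  obtain ⟨haN, hbN, htr, hk⟩ := hab
  refine ⟨mul_mem_normaliser haN hc, mul_mem_normaliser hbN hc, ?_, ?_⟩
  · simpa only [inv_mul_rev, mul_assoc] using (hc _ _ htr).2
  · have hprod : a * (c * inv c) * inv a * (a * inv b) = a * c * inv (b * c) :=
      calc a * (c * inv c) * inv a * (a * inv b) = a * (c * inv c * (inv a * a)) * inv b := by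
            simp only [mul_assoc]
        _ = a * c * inv (b * c) := by
            rw [(isIdem_mul_inv c).comm (isIdem_inv_mul a)]
            simp only [inv_mul_rev, mul_assoc, mul_inv_mul_assoc]
    exact hprod ▸ mul_mem_centraliser hτ
      (mem_centraliser_of_isIdem hτ ((isIdem_mul_inv c).conj a)) hk

end psi

/-- ψ is a two-sided congruence on N(τ). -/
theorem stmt11 {S : Type*} [InverseSemigroup S] (τ : S → S → Prop)
    (hτ : IsECong τ) :
    let N := normaliser τ
    let ψ : S → S → Prop := fun a b =>
      a ∈ N ∧ b ∈ N ∧ τ (inv a * a) (inv b * b) ∧ a * inv b ∈ centraliser τ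
    (∀ a ∈ N, ψ a a) ∧
    (∀ a b, ψ a b → ψ b a) ∧
    (∀ a b c, ψ a b → ψ b c → ψ a c) ∧
    (∀ a b c, c ∈ N → ψ a b → ψ (c * a) (c * b) ∧ ψ (a * c) (b * c)) :=
  ⟨fun _ ha => psi.refl hτ ha, fun _ _ hab => psi.symm hτ hab,
    fun _ _ _ hab hbc => psi.trans hτ hab hbc,
    fun _ _ _ hc hab => ⟨psi.mul_left hτ hc hab, psi.mul_right hτ hc hab⟩⟩
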